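/- arXiv:0809.1408 — 2 statements merged into one kernel-verified Lean document; each statement's English description precedes it below -/
import Mathlib

section
/- SU(4) = H₁·Sp(2): every g ∈ SU(4) can be written as g = h·f, where h ∈ SU(4) is block diagonal of the form diag(u, V) with u ∈ ℂ, |u| = 1, V a 3×3 unitary matrix and u·det V = 1 (i.e. h ∈ S(U(1)×U(3))), and f ∈ SU(4) satisfies f J fᵀ = J (i.e. f lies in the compact symplectic group Sp(2) = SU(4) ∩ Sp(4,ℂ)). -/
open Matrix

/-- The standard 4×4 antisymmetric matrix `J = [[0,E₂],[−E₂,0]]`. -/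
def Jstd : Matrix (Fin 4) (Fin 4) ℂ :=
  !![0,0,1,0; 0,0,0,1; -1,0,0,0; 0,-1,0,0]

/-!
`Sp(2)` acts transitively on the unit sphere of `ℂ⁴`: a unit vector `v` completes to a matrix
in `Sp(2)` with rows `v, b, σv, σb`, where `σx = -J x̄` is the quaternionic structure of
`ℂ⁴ = ℍ²` and `b` is a unit vector orthogonal to `v` for both the hermitian form and the
symplectic form `ω(x, y) = xᵀ J y` (two linear conditions in `ℂ⁴`, so such a `b` exists).
Choosing `f ∈ Sp(2)` with the same first row as `g`, the matrix `h = g f⁻¹` has first row `e₀`,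
hence, being unitary, is block diagonal.
-/

open scoped ComplexOrder

theorem Matrix.exists_mulVec_eq_zero_of_card_lt {K m n : Type*} [Field K] [Fintype m]
    [Fintype n] (M : Matrix m n K) (h : Fintype.card m < Fintype.card n) :
    ∃ x ≠ 0, M *ᵥ x = 0 := by
  obtain ⟨x, hx, hx0⟩ := Submodule.exists_mem_ne_zero_of_ne_bot
    (LinearMap.ker_ne_bot_of_finrank_lt (f := M.mulVecLin) (by simpa using h))
  exact ⟨x, hx0, hx⟩

theorem exists_smul_dotProduct_star_self_eq_one {𝕜 n : Type*} [RCLike 𝕜] [Fintype n]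
    {x : n → 𝕜} (hx : x ≠ 0) : ∃ c : 𝕜, (c • x) ⬝ᵥ star (c • x) = 1 := by
  obtain ⟨r, hr, hrx⟩ := RCLike.pos_iff_exists_ofReal.mp (dotProduct_self_star_pos_iff.mpr hx)
  refine ⟨((√r)⁻¹ : ℝ), ?_⟩
  rw [star_smul, smul_dotProduct, dotProduct_smul, ← hrx, RCLike.star_def, RCLike.conj_ofReal,
    smul_eq_mul, smul_eq_mul]
  norm_cast
  field_simp
  exact (Real.sq_sqrt hr.le).symm

theorem Matrix.col_eq_one_col_of_row_eq_one_row {R n : Type*} [Fintype n] [DecidableEq n]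
    [Semiring R] [StarRing R] {h : Matrix n n R} (hh : h * star h = 1) {i : n}
    (hrow : h i = (1 : Matrix n n R) i) (j : n) :
    h j i = (1 : Matrix n n R) j i := by
  have hrow' : ∀ k, h i k = (1 : Matrix n n R) i k := congrFun hrow
  calc h j i = (h * star (1 : Matrix n n R)) j i := by rw [star_one, mul_one]
    _ = (h * star h) j i := by simp only [mul_apply, star_apply, hrow']
    _ = (1 : Matrix n n R) j i := by rw [hh]

theorem Jstd_mulVec (x : Fin 4 → ℂ) : Jstd *ᵥ x = ![x 2, x 3, -x 0, -x 1] := by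
  ext i
  fin_cases i <;> simp [Jstd, mulVec, dotProduct, Fin.sum_univ_four]

theorem reindex_Jstd :
    reindex (finSumFinEquiv (m := 2) (n := 2)).symm finSumFinEquiv.symm Jstd = -J (Fin 2) ℂ := by
  ext (i | i) (j | j) <;> fin_cases i <;> fin_cases j <;>
    simp [J, Jstd, finSumFinEquiv, Fin.castAdd, Fin.natAdd]

theorem det_eq_one_of_mul_Jstd_mul_transpose {A : Matrix (Fin 4) (Fin 4) ℂ}
    (hA : A * Jstd * Aᵀ = Jstd) : A.det = 1 := by
  let e : Fin 4 ≃ Fin 2 ⊕ Fin 2 := (finSumFinEquiv (m := 2) (n := 2)).symm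
  have hmem : reindex e e A ∈ symplecticGroup (Fin 2) ℂ := by
    have := congrArg (reindexAlgEquiv ℂ ℂ e) hA
    simp only [map_mul, coe_reindexAlgEquiv, ← transpose_reindex, e, reindex_Jstd] at this
    simpa [SymplecticGroup.mem_iff, e] using this
  rw [← det_reindex_self e A]
  exact SymplecticGroup.det_eq_one hmem

def quaternionicConj (x : Fin 4 → ℂ) : Fin 4 → ℂ :=
  ![-star (x 2), -star (x 3), star (x 0), star (x 1)]

def spFrame (v b : Fin 4 → ℂ) : Matrix (Fin 4) (Fin 4) ℂ :=
  of ![v, b, quaternionicConj v, quaternionicConj b]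

theorem spFrame_mem_unitaryGroup_and_symplectic {v b : Fin 4 → ℂ} (hv : v ⬝ᵥ star v = 1)
    (hb : b ⬝ᵥ star b = 1) (hbv : b ⬝ᵥ star v = 0) (hω : v ⬝ᵥ Jstd *ᵥ b = 0) :
    spFrame v b ∈ unitaryGroup (Fin 4) ℂ ∧ spFrame v b * Jstd * (spFrame v b)ᵀ = Jstd := by
  have hbv' := congrArg star hbv
  have hω' := congrArg star hω
  simp only [dotProduct, Fin.sum_univ_four, Jstd_mulVec, Pi.star_apply, star_add, star_mul',
    star_neg, star_zero, star_star, cons_val_zero, cons_val_one, cons_val] at hv hb hbv hω hbv' hω'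
  rw [mem_unitaryGroup_iff]
  constructor <;> ext i j <;> fin_cases i <;> fin_cases j <;>
    simp only [spFrame, quaternionicConj, Jstd, mul_apply, transpose_apply, star_apply,
      Fin.sum_univ_four, of_apply, Fin.isValue, Fin.zero_eta, Fin.mk_one, Fin.reduceFinMk,
      cons_val, cons_val_zero, cons_val_one, one_apply, star_neg, star_star] <;>
    grind

theorem exists_unit_orthogonal_and_symplectic_orthogonal (v : Fin 4 → ℂ) :
    ∃ b : Fin 4 → ℂ, b ⬝ᵥ star b = 1 ∧ b ⬝ᵥ star v = 0 ∧ v ⬝ᵥ Jstd *ᵥ b = 0 := by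
  obtain ⟨x, hx0, hx⟩ := (of ![star v, v ᵥ* Jstd]).exists_mulVec_eq_zero_of_card_lt (by simp)
  obtain ⟨c, hc⟩ := exists_smul_dotProduct_star_self_eq_one hx0
  have h0 : star v ⬝ᵥ x = 0 := congrFun hx 0
  have h1 : v ᵥ* Jstd ⬝ᵥ x = 0 := congrFun hx 1
  refine ⟨c • x, hc, ?_, ?_⟩
  · rw [smul_dotProduct, dotProduct_comm, h0, smul_zero]
  · rw [mulVec_smul, dotProduct_smul, dotProduct_mulVec, h1, smul_zero]

theorem exists_mem_sp2_row_zero_eq {v : Fin 4 → ℂ} (hv : v ⬝ᵥ star v = 1) :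
    ∃ f ∈ specialUnitaryGroup (Fin 4) ℂ, f * Jstd * fᵀ = Jstd ∧ f 0 = v := by
  obtain ⟨b, hb, hbv, hω⟩ := exists_unit_orthogonal_and_symplectic_orthogonal v
  obtain ⟨hU, hJ⟩ := spFrame_mem_unitaryGroup_and_symplectic hv hb hbv hω
  exact ⟨spFrame v b, mem_specialUnitaryGroup_iff.mpr
    ⟨hU, det_eq_one_of_mul_Jstd_mul_transpose hJ⟩, hJ, rfl⟩

/-- `SU(4) = H₁·Sp(2)`: every `g ∈ SU(4)` factors as `g = h·f` where
`h ∈ SU(4)` is block diagonal `diag(u, V)` (i.e. `h ∈ S(U(1)×U(3))`: all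
entries in row `0` and column `0` off the `(0,0)` slot vanish) and `f ∈ SU(4)`
satisfies `f J fᵀ = J`, i.e. `f` lies in the compact symplectic group
`Sp(2) = SU(4) ∩ Sp(4,ℂ)`. -/
theorem SU4_eq_SU1U3_mul_Sp2 :
    ∀ g ∈ Matrix.specialUnitaryGroup (Fin 4) ℂ,
      ∃ h f : Matrix (Fin 4) (Fin 4) ℂ,
        h ∈ Matrix.specialUnitaryGroup (Fin 4) ℂ ∧
        f ∈ Matrix.specialUnitaryGroup (Fin 4) ℂ ∧
        (∀ j : Fin 4, j ≠ 0 → h 0 j = 0 ∧ h j 0 = 0) ∧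
        f * Jstd * fᵀ = Jstd ∧
        g = h * f := by
  intro g hg
  have hg0 : g 0 ⬝ᵥ star (g 0) = 1 :=
    congrFun₂ (mem_unitaryGroup_iff.mp (mem_specialUnitaryGroup_iff.mp hg).1) 0 0
  obtain ⟨f, hf, hfJ, hf0⟩ := exists_mem_sp2_row_zero_eq hg0
  have hfU : f ∈ unitaryGroup (Fin 4) ℂ := (mem_specialUnitaryGroup_iff.mp hf).1
  have hh : g * star f ∈ specialUnitaryGroup (Fin 4) ℂ :=
    mul_mem hg (star (⟨f, hf⟩ : specialUnitaryGroup (Fin 4) ℂ)).2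
  have hrow : (g * star f) 0 = (1 : Matrix (Fin 4) (Fin 4) ℂ) 0 := by
    rw [mul_apply_eq_vecMul, ← hf0, ← mul_apply_eq_vecMul, mem_unitaryGroup_iff.mp hfU]
  have hcol := col_eq_one_col_of_row_eq_one_row
    (mem_unitaryGroup_iff.mp (mem_specialUnitaryGroup_iff.mp hh).1) hrow
  refine ⟨g * star f, f, hh, hf, fun j hj => ⟨?_, ?_⟩, hfJ, ?_⟩
  · rw [hrow, one_apply_ne hj.symm]
  · rw [hcol, one_apply_ne hj]
  · rw [mul_assoc, mem_unitaryGroup_iff'.mp hfU, mul_one]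
end

section
/- BPS equations in six Euclidean dimensions (ν = 1/4): in Cl₆ let Ω = ¼(1 + Γ₁₂₃₄)(1 + Γ₁₂₅₆). Then Ω is an idempotent, and for every antisymmetric F : {1,…,6}² → ℝ one has X_F·Ω = 0 if and only if the following seven equations hold: F₁₂ + F₄₃ + F₆₅ = 0, F₁₃ + F₂₄ = 0, F₁₄ + F₃₂ = 0, F₁₅ + F₂₆ = 0, F₁₆ + F₅₂ = 0, F₃₅ + F₆₄ = 0, F₃₆ + F₄₅ = 0. -/
/-- The positive-definite quadratic form `Q(x) = x₁² + ⋯ + x_d²` on `ℝ^d`, `d = 6`. -/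
noncomputable def Q6 : QuadraticForm ℝ (Fin 6 → ℝ) :=
  QuadraticMap.weightedSumSquares ℝ (fun _ : Fin 6 => (1 : ℝ))

/-- `Γ_a` (`a = 1,…,6`, indexed here by `Fin 6`): the image of the `a`-th
standard basis vector in `Cl_6`. -/
noncomputable def G6 (a : Fin 6) : CliffordAlgebra Q6 :=
  CliffordAlgebra.ι Q6 (Pi.single a 1)

/-- `X_F = ∑_{a,b} F_{ab} Γ_aΓ_b`. -/
noncomputable def X6 (F : Fin 6 → Fin 6 → ℝ) : CliffordAlgebra Q6 :=
  ∑ a, ∑ b, F a b • (G6 a * G6 b)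

/-- The projector of the `ν = 1/4` BPS system in six Euclidean dimensions:
`Ω = ¼(1 + Γ₁₂₃₄)(1 + Γ₁₂₅₆)`. -/
noncomputable def Omega6 : CliffordAlgebra Q6 :=
  (1 / 4 : ℝ) • ((1 + G6 0 * G6 1 * G6 2 * G6 3) * (1 + G6 0 * G6 1 * G6 4 * G6 5))

/-!
`Γ₁₂₃₄` and `Γ₁₂₅₆` are commuting involutions, so `Ω` absorbs both of them (and their product)
from the left; in particular `Ω² = ¼(1 + Γ₁₂₃₄)(1 + Γ₁₂₅₆)Ω = Ω`. The absorption identifies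
`Γ_{ab}Ω` for eight of the fifteen pairs `a < b` with `±Γ_{cd}Ω` for one of the seven others, so
`X_F Ω = 2 ∑ₖ cₖ(F) Γ_{pₖqₖ}Ω` where the `cₖ(F)` are the seven BPS expressions. The seven elements
`Γ_{pₖqₖ}Ω` are linearly independent: in the complex spinor representation on `ℂ⁸` they send a
common `+1`-eigenvector of `Γ₁₂₃₄` and `Γ₁₂₅₆` to seven `ℝ`-linearly independent vectors.
-/
open CliffordAlgebra Complex

lemma mul_one_add_of_mul_self_eq_one {A : Type*} [NonAssocSemiring A] {p : A}
    (hp : p * p = 1) : p * (1 + p) = 1 + p := by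
  rw [mul_add, mul_one, hp, add_comm]

lemma mul_eq_mul_of_mul_eq {M : Type*} [Semigroup M] {x y u e : M} (hu : u * e = e)
    (h : x * u = y) : x * e = y * e :=
  calc x * e = x * (u * e) := by rw [hu]
    _ = y * e := by rw [← mul_assoc, h]

section Projector

variable {A : Type*} [Ring A] [Algebra ℝ A] {p r : A}

noncomputable def bpsProjector (p r : A) : A := (1 / 4 : ℝ) • ((1 + p) * (1 + r))

lemma mul_bpsProjector_left (hp : p * p = 1) : p * bpsProjector p r = bpsProjector p r := by
  rw [bpsProjector, mul_smul_comm, ← mul_assoc, mul_one_add_of_mul_self_eq_one hp]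

lemma mul_bpsProjector_right (hr : r * r = 1) (hpr : Commute p r) :
    r * bpsProjector p r = bpsProjector p r := by
  rw [bpsProjector, mul_smul_comm, ((Commute.one_right r).add_right hpr.symm).left_comm,
    mul_one_add_of_mul_self_eq_one hr]

lemma isIdempotentElem_bpsProjector (hp : p * p = 1) (hr : r * r = 1) (hpr : Commute p r) :
    IsIdempotentElem (bpsProjector p r) := by
  have hpΩ := mul_bpsProjector_left (r := r) hp
  have hrΩ := mul_bpsProjector_right hr hpr
  unfold IsIdempotentElem
  conv_lhs => arg 1; rw [bpsProjector]
  simp only [smul_mul_assoc, add_mul, one_mul, mul_add, mul_assoc, hpΩ, hrΩ]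
  module

end Projector

lemma Q6_apply (m : Fin 6 → ℝ) : Q6 m = ∑ a, m a * m a := by
  simp [Q6, QuadraticMap.weightedSumSquares_apply]

lemma Q6_isOrtho_single {a b : Fin 6} (h : a ≠ b) :
    Q6.IsOrtho (Pi.single a 1) (Pi.single b 1) := by
  rw [QuadraticMap.isOrtho_def]
  simp [Q6_apply, Pi.single_apply, mul_add, Finset.sum_add_distrib, h, h.symm]

@[simp] lemma G6_mul_self (a : Fin 6) : G6 a * G6 a = 1 := by
  rw [G6, ι_sq_scalar, Q6_apply]
  simp [Pi.single_apply]

@[simp] lemma G6_mul_self_mul (a : Fin 6) (x : CliffordAlgebra Q6) : G6 a * (G6 a * x) = x := by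
  rw [← mul_assoc, G6_mul_self, one_mul]

@[simp] lemma G6_mul_G6_of_lt {a b : Fin 6} (h : b < a) : G6 a * G6 b = -(G6 b * G6 a) :=
  ι_mul_ι_comm_of_isOrtho (Q6_isOrtho_single h.ne')

@[simp] lemma G6_mul_G6_mul_of_lt {a b : Fin 6} (h : b < a) (x : CliffordAlgebra Q6) :
    G6 a * (G6 b * x) = -(G6 b * (G6 a * x)) :=
  ι_mul_ι_mul_of_isOrtho x (Q6_isOrtho_single h.ne')

lemma isIdempotentElem_Omega6 : IsIdempotentElem Omega6 :=
  isIdempotentElem_bpsProjector (by simp [mul_assoc]) (by simp [mul_assoc])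
    (by simp [Commute, SemiconjBy, mul_assoc])

lemma Gamma1234_mul_Omega6 : G6 0 * G6 1 * G6 2 * G6 3 * Omega6 = Omega6 :=
  mul_bpsProjector_left (by simp [mul_assoc])

lemma Gamma1256_mul_Omega6 : G6 0 * G6 1 * G6 4 * G6 5 * Omega6 = Omega6 :=
  mul_bpsProjector_right (by simp [mul_assoc]) (by simp [Commute, SemiconjBy, mul_assoc])

lemma Gamma1234_mul_Gamma1256_mul_Omega6 :
    G6 0 * G6 1 * G6 2 * G6 3 * (G6 0 * G6 1 * G6 4 * G6 5) * Omega6 = Omega6 := by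
  rw [mul_assoc _ (G6 0 * G6 1 * G6 4 * G6 5), Gamma1256_mul_Omega6, Gamma1234_mul_Omega6]

def bpsPair : Fin 7 → Fin 6 × Fin 6 := ![(0, 1), (0, 2), (0, 3), (0, 4), (0, 5), (2, 4), (2, 5)]

def bpsCoeff (F : Fin 6 → Fin 6 → ℝ) : Fin 7 → ℝ :=
  ![F 0 1 + F 3 2 + F 5 4, F 0 2 + F 1 3, F 0 3 + F 2 1, F 0 4 + F 1 5, F 0 5 + F 4 1,
    F 2 4 + F 5 3, F 2 5 + F 3 4]

lemma X6_mul_Omega6 (F : Fin 6 → Fin 6 → ℝ) (hF : ∀ a b, F a b = -F b a) :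
    X6 F * Omega6 =
      ∑ k, (2 * bpsCoeff F k) • (G6 (bpsPair k).1 * G6 (bpsPair k).2 * Omega6) := by
  have hdiag (a : Fin 6) : F a a = 0 := by linarith [hF a a]
  have hlower {a b : Fin 6} (_ : b < a) : F a b = -F b a := hF a b
  have h23 : G6 2 * G6 3 * Omega6 = -(G6 0 * G6 1) * Omega6 :=
    mul_eq_mul_of_mul_eq Gamma1234_mul_Omega6 (by simp [mul_assoc])
  have h13 : G6 1 * G6 3 * Omega6 = G6 0 * G6 2 * Omega6 :=
    mul_eq_mul_of_mul_eq Gamma1234_mul_Omega6 (by simp [mul_assoc])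
  have h12 : G6 1 * G6 2 * Omega6 = -(G6 0 * G6 3) * Omega6 :=
    mul_eq_mul_of_mul_eq Gamma1234_mul_Omega6 (by simp [mul_assoc])
  have h45 : G6 4 * G6 5 * Omega6 = -(G6 0 * G6 1) * Omega6 :=
    mul_eq_mul_of_mul_eq Gamma1256_mul_Omega6 (by simp [mul_assoc])
  have h15 : G6 1 * G6 5 * Omega6 = G6 0 * G6 4 * Omega6 :=
    mul_eq_mul_of_mul_eq Gamma1256_mul_Omega6 (by simp [mul_assoc])
  have h14 : G6 1 * G6 4 * Omega6 = -(G6 0 * G6 5) * Omega6 :=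
    mul_eq_mul_of_mul_eq Gamma1256_mul_Omega6 (by simp [mul_assoc])
  have h35 : G6 3 * G6 5 * Omega6 = -(G6 2 * G6 4) * Omega6 :=
    mul_eq_mul_of_mul_eq Gamma1234_mul_Gamma1256_mul_Omega6 (by simp [mul_assoc])
  have h34 : G6 3 * G6 4 * Omega6 = G6 2 * G6 5 * Omega6 :=
    mul_eq_mul_of_mul_eq Gamma1234_mul_Gamma1256_mul_Omega6 (by simp [mul_assoc])
  simp only [X6, Fin.sum_univ_six, Fin.sum_univ_seven, add_mul, smul_mul_assoc, bpsPair,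
    bpsCoeff, hdiag, zero_smul, G6_mul_self, zero_mul]
  simp only [G6_mul_G6_of_lt, hlower, Fin.reduceLT, neg_mul, smul_neg, neg_smul, neg_neg,
    h23, h13, h12, h45, h15, h14, h35, h34]
  simp only [Matrix.cons_val]
  module

/-- Clifford multiplication by `∑ₐ m a • G6 a` on `ℂ⁸ = (ℂ²)^{⊗3}`: `G6 (2k)` and `G6 (2k+1)` act by
the Jordan–Wigner matrices `Z^{⊗k} ⊗ X ⊗ 1^{⊗(2-k)}` and `Z^{⊗k} ⊗ Y ⊗ 1^{⊗(2-k)}`, written out in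
coordinates (`|abc⟩` has index `4a + 2b + c`). -/
noncomputable def spinorAction : (Fin 6 → ℝ) →ₗ[ℝ] Module.End ℝ (Fin 8 → ℂ) :=
  LinearMap.mk₂ ℝ
    (fun m x => ![(m 0 - I * m 1) * x 4 + (m 2 - I * m 3) * x 2 + (m 4 - I * m 5) * x 1,
      (m 0 - I * m 1) * x 5 + (m 2 - I * m 3) * x 3 + (m 4 + I * m 5) * x 0,
      (m 0 - I * m 1) * x 6 + (m 2 + I * m 3) * x 0 - (m 4 - I * m 5) * x 3,
      (m 0 - I * m 1) * x 7 + (m 2 + I * m 3) * x 1 - (m 4 + I * m 5) * x 2,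
      (m 0 + I * m 1) * x 0 - (m 2 - I * m 3) * x 6 - (m 4 - I * m 5) * x 5,
      (m 0 + I * m 1) * x 1 - (m 2 - I * m 3) * x 7 - (m 4 + I * m 5) * x 4,
      (m 0 + I * m 1) * x 2 - (m 2 + I * m 3) * x 4 + (m 4 - I * m 5) * x 7,
      (m 0 + I * m 1) * x 3 - (m 2 + I * m 3) * x 5 + (m 4 + I * m 5) * x 6])
    (fun m m' x => by ext i; fin_cases i <;> simp <;> ring)
    (fun c m x => by ext i; fin_cases i <;> simp <;> ring)
    (fun m x x' => by ext i; fin_cases i <;> simp <;> ring)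
    (fun c m x => by ext i; fin_cases i <;> simp <;> ring)

lemma spinorAction_mul_self (m : Fin 6 → ℝ) :
    spinorAction m * spinorAction m = algebraMap ℝ _ (Q6 m) := by
  refine LinearMap.ext fun x => funext fun i => ?_
  fin_cases i <;>
  · simp [spinorAction, Q6_apply, Fin.sum_univ_six]
    ring_nf
    rw [I_sq]
    ring

noncomputable def spinRep : CliffordAlgebra Q6 →ₐ[ℝ] Module.End ℝ (Fin 8 → ℂ) :=
  CliffordAlgebra.lift Q6 ⟨spinorAction, spinorAction_mul_self⟩

lemma spinRep_G6 (a : Fin 6) : spinRep (G6 a) = spinorAction (Pi.single a 1) :=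
  CliffordAlgebra.lift_ι_apply _ _ _

def bpsSpinor : Fin 8 → ℂ := ![0, 0, 0, 0, 1, 0, 0, 0]

lemma spinRep_Omega6_bpsSpinor : spinRep Omega6 bpsSpinor = bpsSpinor := by
  ext i
  fin_cases i <;> simp [Omega6, spinRep_G6, spinorAction, bpsSpinor]
  ring_nf
  norm_num [I_sq]

lemma linearIndependent_bpsPair :
    LinearIndependent ℝ fun k => G6 (bpsPair k).1 * G6 (bpsPair k).2 * Omega6 := by
  refine LinearIndependent.of_comp ((LinearMap.applyₗ bpsSpinor).comp spinRep.toLinearMap) ?_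
  refine Fintype.linearIndependent_iff.2 fun c hc => ?_
  simp only [LinearMap.coe_comp, Function.comp_apply, AlgHom.toLinearMap_apply,
    LinearMap.applyₗ_apply_apply, map_mul, Module.End.mul_apply, spinRep_Omega6_bpsSpinor,
    spinRep_G6] at hc
  have h := congrFun hc
  simp [Fin.sum_univ_seven, bpsPair, spinorAction, bpsSpinor, Complex.ext_iff,
    Fin.forall_fin_succ] at h
  simp [Fin.forall_fin_succ, h]

lemma X6_mul_Omega6_eq_zero_iff (F : Fin 6 → Fin 6 → ℝ) (hF : ∀ a b, F a b = -F b a) :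
    X6 F * Omega6 = 0 ↔ ∀ k, bpsCoeff F k = 0 := by
  rw [X6_mul_Omega6 F hF]
  refine ⟨fun h k => ?_, fun h => by simp [h]⟩
  simpa using Fintype.linearIndependent_iff.1 linearIndependent_bpsPair _ h k

/-- BPS equations in six Euclidean dimensions (`ν = 1/4`):
`Ω = ¼(1 + Γ₁₂₃₄)(1 + Γ₁₂₅₆)` is an idempotent, and for antisymmetric `F` one
has `X_F·Ω = 0` iff the seven equations `F₁₂+F₄₃+F₆₅ = 0`, `F₁₃+F₂₄ = 0`,
`F₁₄+F₃₂ = 0`, `F₁₅+F₂₆ = 0`, `F₁₆+F₅₂ = 0`, `F₃₅+F₆₄ = 0`, `F₃₆+F₄₅ = 0` hold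
(indices shifted down by one since `Fin 6` starts at `0`). -/
theorem bps_six_dimensions :
    Omega6 * Omega6 = Omega6 ∧
    ∀ F : Fin 6 → Fin 6 → ℝ, (∀ a b, F a b = -F b a) →
      (X6 F * Omega6 = 0 ↔
        (F 0 1 + F 3 2 + F 5 4 = 0 ∧
         F 0 2 + F 1 3 = 0 ∧
         F 0 3 + F 2 1 = 0 ∧
         F 0 4 + F 1 5 = 0 ∧
         F 0 5 + F 4 1 = 0 ∧
         F 2 4 + F 5 3 = 0 ∧
         F 2 5 + F 3 4 = 0)) := by
  refine ⟨isIdempotentElem_Omega6.eq, fun F hF => ?_⟩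
  rw [X6_mul_Omega6_eq_zero_iff F hF]
  simp [Fin.forall_fin_succ, bpsCoeff]
end
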